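/- Let $T > 0$, $R > 0$ with $R T^2 \leq \pi^2$. Let $p : [0,T] \times \mathbb{R}^d \to \mathbb{R}$ be continuous, twice continuously differentiable in the space variable, with spatial Hessian satisfying $\langle \nabla_x^2 p(t,x) v, v \rangle \leq R |v|^2$ for all $t \in [0,T]$ and $x, v \in \mathbb{R}^d$. Let $g : [0,T] \to \mathbb{R}^d$ be twice continuously differentiable and satisfy Newton's equation $\ddot g(t) = -\nabla_x p(t, g(t))$ for all $t \in [0,T]$, and let $g^* : [0,T] \to \mathbb{R}^d$ be continuously differentiable with $g^*(0) = g(0)$ and $g^*(T) = g(T)$. Then $\int_0^T \Big( \frac{1}{2} |\dot g(t)|^2 - p(t, g(t)) \Big) dt \leq \int_0^T \Big( \frac{1}{2} |\dot g^*(t)|^2 - p(t, g^*(t)) \Big) dt$. -/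

import Mathlib

open MeasureTheory Real
open scoped RealInnerProductSpace

section aux
variable {E : Type*} [NormedAddCommGroup E] [InnerProductSpace ℝ E] [CompleteSpace E]

lemma inner_gradient_eq_fderiv' (f : E → ℝ) (x v : E) :
    ⟪gradient f x, v⟫ = fderiv ℝ f x v := by
  rw [← InnerProductSpace.toDual_apply_apply, gradient,
    LinearIsometryEquiv.apply_symm_apply]

lemma taylor_quadratic_upper (f : E → ℝ) (hf : ContDiff ℝ 2 f) (R : ℝ)
    (hH : ∀ x v : E, iteratedFDeriv ℝ 2 f x ![v, v] ≤ R * ‖v‖ ^ 2) (a v : E) :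
    f (a + v) ≤ f a + fderiv ℝ f a v + R / 2 * ‖v‖ ^ 2 := by
  have hfd : Differentiable ℝ f := hf.differentiable two_ne_zero
  have hDf : ContDiff ℝ 1 (fderiv ℝ f) := hf.fderiv_right (le_refl 2)
  set L : ℝ → E := fun s => a + s • v with hL
  have hline : ∀ s : ℝ, HasDerivAt L v s := by
    intro s
    exact (((hasDerivAt_id s).smul_const v).const_add a).congr_deriv (by simp)
  set φ' : ℝ → ℝ := fun s => fderiv ℝ f (L s) v with hφ'def
  have hφ : ∀ s : ℝ, HasDerivAt (fun s => f (L s)) (φ' s) s := fun s =>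
    (hfd (L s)).hasFDerivAt.comp_hasDerivAt s (hline s)
  set φ'' : ℝ → ℝ := fun s => fderiv ℝ (fderiv ℝ f) (L s) v v with hφ''def
  have hφ' : ∀ s : ℝ, HasDerivAt φ' (φ'' s) s := by
    intro s
    have h1 : HasDerivAt (fun s => fderiv ℝ f (L s)) (fderiv ℝ (fderiv ℝ f) (L s) v) s :=
      (hDf.differentiable one_ne_zero (L s)).hasFDerivAt.comp_hasDerivAt s (hline s)
    exact ((ContinuousLinearMap.apply ℝ ℝ v).hasFDerivAt.comp_hasDerivAt s h1 :)
  have hφ''le : ∀ s : ℝ, φ'' s ≤ R * ‖v‖ ^ 2 := by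
    intro s
    have := hH (L s) v
    rwa [iteratedFDeriv_two_apply] at this
    -- goal may require simp of ![v,v] 0, 1
  -- ψ' s := φ' s - φ' 0 - R * s * ‖v‖^2 is antitone-ish: derivative ≤ 0
  set ψ' : ℝ → ℝ := fun s => φ' s - φ' 0 - R * s * ‖v‖ ^ 2 with hψ'def
  have hψ'deriv : ∀ s : ℝ, HasDerivAt ψ' (φ'' s - R * ‖v‖ ^ 2) s := by
    intro s
    exact (((hφ' s).sub_const (φ' 0)).sub
      (((hasDerivAt_id s).const_mul R).mul_const (‖v‖ ^ 2))).congr_deriv (by ring)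
  have hψ'anti : Antitone ψ' := by
    apply antitone_of_deriv_nonpos (fun s => (hψ'deriv s).differentiableAt)
    intro s
    rw [(hψ'deriv s).deriv]
    linarith [hφ''le s]
  have hψ'le : ∀ s : ℝ, 0 ≤ s → ψ' s ≤ 0 := by
    intro s hs
    have := hψ'anti hs
    simpa [hψ'def] using this
  -- ψ s := f (L s) - f a - s * φ' 0 - R/2 * s^2 * ‖v‖^2
  set ψ : ℝ → ℝ := fun s => f (L s) - f (L 0) - s * φ' 0 - R / 2 * s ^ 2 * ‖v‖ ^ 2 with hψdef
  have hψderiv : ∀ s : ℝ, HasDerivAt ψ (ψ' s) s := by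
    intro s
    have h1 : HasDerivAt (fun s : ℝ => R / 2 * s ^ 2 * ‖v‖ ^ 2) (R * s * ‖v‖ ^ 2) s := by
      have := (((hasDerivAt_pow 2 s).const_mul (R / 2)).mul_const (‖v‖ ^ 2))
      refine this.congr_deriv ?_
      push_cast
      ring
    have := (((hφ s).sub_const (f (L 0))).sub ((hasDerivAt_id s).mul_const (φ' 0))).sub h1
    exact this.congr_deriv (by simp [hψ'def])
  have hanti : AntitoneOn ψ (Set.Ici (0:ℝ)) := by
    apply antitoneOn_of_deriv_nonpos (convex_Ici 0)
      (Continuous.continuousOn (continuous_iff_continuousAt.mpr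
        fun s => (hψderiv s).differentiableAt.continuousAt))
    · intro s hs
      exact (hψderiv s).differentiableAt.differentiableWithinAt
    · intro s hs
      rw [(hψderiv s).deriv]
      exact hψ'le s (le_of_lt (by simpa using hs))
  have h01 : ψ 1 ≤ ψ 0 := hanti (Set.self_mem_Ici) (Set.mem_Ici.mpr zero_le_one) zero_le_one
  simp only [hψdef, hL] at h01
  simp only [zero_smul, add_zero, one_smul, one_pow, mul_one, one_mul] at h01
  have : φ' 0 = fderiv ℝ f a v := by simp [hφ'def, hL]
  rw [this] at h01
  linarith
end aux

lemma cot_le_inv' {x : ℝ} (h0 : 0 < x) (hπ : x < π) :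
    Real.cos x / Real.sin x ≤ 1 / x := by
  have hs : 0 < Real.sin x := Real.sin_pos_of_pos_of_lt_pi h0 hπ
  rcases lt_or_ge x (π / 2) with hx | hx
  · have ht := Real.lt_tan h0 hx
    rw [Real.tan_eq_sin_div_cos] at ht
    have hc : 0 < Real.cos x := Real.cos_pos_of_mem_Ioo ⟨by linarith [Real.pi_pos], hx⟩
    rw [div_le_div_iff₀ hs h0]
    have := (lt_div_iff₀ hc).mp ht
    nlinarith
  · have hc : Real.cos x ≤ 0 :=
      Real.cos_nonpos_of_pi_div_two_le_of_le hx (by linarith [Real.pi_pos])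
    have h1 : (0:ℝ) < 1 / x := by positivity
    have : Real.cos x / Real.sin x ≤ 0 := div_nonpos_iff.mpr (Or.inr ⟨hc, hs.le⟩)
    linarith

section poincare
variable {E : Type*} [NormedAddCommGroup E] [InnerProductSpace ℝ E]

lemma poincare_dirichlet {T : ℝ} (hT : 0 < T) (h h' : ℝ → E)
    (hh : ∀ t ∈ Set.Icc (0:ℝ) T, HasDerivAt h (h' t) t)
    (hh' : ContinuousOn h' (Set.Icc (0:ℝ) T))
    (h0 : h 0 = 0) (hTe : h T = 0) :
    0 ≤ ∫ t in (0:ℝ)..T, (‖h' t‖ ^ 2 - (π / T) ^ 2 * ‖h t‖ ^ 2) := by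
  have hcont_h : ContinuousOn h (Set.Icc (0:ℝ) T) :=
    fun t ht => (hh t ht).continuousAt.continuousWithinAt
  set lam : ℝ := π / T with hlam
  have hlam_pos : 0 < lam := div_pos Real.pi_pos hT
  have hlamT : lam * T = π := div_mul_cancel₀ π hT.ne'
  set q : ℝ → ℝ := fun t => ‖h' t‖ ^ 2 - lam ^ 2 * ‖h t‖ ^ 2 with hq
  have hqcont : ContinuousOn q (Set.Icc (0:ℝ) T) := by
    apply ContinuousOn.sub
    · exact (hh'.norm).pow 2
    · exact continuousOn_const.mul ((hcont_h.norm).pow 2)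
  -- bound on h'
  obtain ⟨C, hC⟩ := (isCompact_Icc (a := (0:ℝ)) (b := T)).exists_bound_of_continuousOn hh'
  have hC0 : 0 ≤ C := le_trans (norm_nonneg _) (hC 0 ⟨le_rfl, hT.le⟩)
  have hhb : ∀ t ∈ Set.Icc (0:ℝ) T, ‖h t‖ ≤ C * t ∧ ‖h t‖ ≤ C * (T - t) := by
    intro t ht
    have key : ∀ a b : ℝ, a ∈ Set.Icc (0:ℝ) T → b ∈ Set.Icc (0:ℝ) T →
        ‖h b - h a‖ ≤ C * |b - a| := by
      intro a b ha hb
      have := (convex_Icc (0:ℝ) T).norm_image_sub_le_of_norm_hasDerivWithin_le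
        (fun x hx => (hh x hx).hasDerivWithinAt) (fun x hx => hC x hx) ha hb
      simpa [Real.norm_eq_abs] using this
    constructor
    · have := key 0 t ⟨le_rfl, hT.le⟩ ht
      rw [h0] at this
      simpa [abs_of_nonneg ht.1] using this
    · have := key T t ⟨hT.le, le_rfl⟩ ht
      rw [hTe] at this
      have habs : |t - T| = T - t := by
        rw [abs_sub_comm]; exact abs_of_nonneg (by linarith [ht.2])
      simpa [habs] using this
  -- the multiplier
  set F : ℝ → ℝ := fun t => lam * (Real.cos (lam * t) / Real.sin (lam * t)) with hF
  set Φ : ℝ → ℝ := fun t => F t * ⟪h t, h t⟫ with hΦ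
  set Φ' : ℝ → ℝ := fun t =>
    (-(lam ^ 2) / Real.sin (lam * t) ^ 2) * ⟪h t, h t⟫
      + F t * (⟪h t, h' t⟫ + ⟪h' t, h t⟫) with hΦ'
  have hsin : ∀ t ∈ Set.Ioo (0:ℝ) T, 0 < Real.sin (lam * t) := by
    intro t ht
    apply Real.sin_pos_of_pos_of_lt_pi (mul_pos hlam_pos ht.1)
    calc lam * t < lam * T := mul_lt_mul_of_pos_left ht.2 hlam_pos
      _ = π := hlamT
  have hlin : ∀ t : ℝ, HasDerivAt (fun t : ℝ => lam * t) lam t := by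
    intro t
    simpa using (hasDerivAt_id t).const_mul lam
  have hΦderiv : ∀ t ∈ Set.Ioo (0:ℝ) T, HasDerivAt Φ (Φ' t) t := by
    intro t ht
    have hs := hsin t ht
    have hcos : HasDerivAt (fun t => Real.cos (lam * t)) (-Real.sin (lam * t) * lam) t :=
      (Real.hasDerivAt_cos (lam * t)).comp t (hlin t)
    have hsinD : HasDerivAt (fun t => Real.sin (lam * t)) (Real.cos (lam * t) * lam) t :=
      (Real.hasDerivAt_sin (lam * t)).comp t (hlin t)
    have hdiv := (hcos.div hsinD hs.ne')
    have hFd : HasDerivAt F (-(lam ^ 2) / Real.sin (lam * t) ^ 2) t := by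
      have := hdiv.const_mul lam
      refine this.congr_deriv ?_
      have hpyth := Real.sin_sq_add_cos_sq (lam * t)
      field_simp
      linear_combination (-1 : ℝ) * hpyth
    have hinner : HasDerivAt (fun t => ⟪h t, h t⟫) (⟪h t, h' t⟫ + ⟪h' t, h t⟫) t :=
      (hh t (Set.Ioo_subset_Icc_self ht)).inner ℝ (hh t (Set.Ioo_subset_Icc_self ht))
    exact hFd.mul hinner
  -- key estimate on [ε, T-ε]
  have hkey : ∀ ε ∈ Set.Ioo (0:ℝ) (T / 2),
      Φ (T - ε) - Φ ε ≤ ∫ t in ε..(T - ε), q t := by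
    intro ε hε
    have hεT : ε ≤ T - ε := by linarith [hε.2]
    have hsub : Set.Icc ε (T - ε) ⊆ Set.Ioo 0 T := fun x hx =>
      ⟨lt_of_lt_of_le hε.1 hx.1, lt_of_le_of_lt hx.2 (by linarith [hε.1])⟩
    have hsub' : Set.Icc ε (T - ε) ⊆ Set.Icc 0 T :=
      subset_trans hsub Set.Ioo_subset_Icc_self
    have huicc : Set.uIcc ε (T - ε) = Set.Icc ε (T - ε) := Set.uIcc_of_le hεT
    have hΦ'cont : ContinuousOn Φ' (Set.Icc ε (T - ε)) := by
      have hsinC : ContinuousOn (fun t => Real.sin (lam * t)) (Set.Icc ε (T - ε)) :=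
        (Real.continuous_sin.comp (continuous_const.mul continuous_id)).continuousOn
      have hFc : ContinuousOn F (Set.Icc ε (T - ε)) := by
        apply continuousOn_const.mul
        apply ContinuousOn.div
          ((Real.continuous_cos.comp (continuous_const.mul continuous_id)).continuousOn)
          hsinC
        exact fun x hx => (hsin x (hsub hx)).ne'
      have hhC : ContinuousOn h (Set.Icc ε (T - ε)) := hcont_h.mono hsub'
      have hh'C : ContinuousOn h' (Set.Icc ε (T - ε)) := hh'.mono hsub'
      apply ContinuousOn.add
      · apply ContinuousOn.mul
        · exact (continuousOn_const.div (hsinC.pow 2)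
            (fun x hx => pow_ne_zero 2 (hsin x (hsub hx)).ne'))
        · exact hhC.inner hhC
      · exact hFc.mul ((hhC.inner hh'C).add (hh'C.inner hhC))
    have hint : ∫ t in ε..(T - ε), Φ' t = Φ (T - ε) - Φ ε := by
      apply intervalIntegral.integral_eq_sub_of_hasDerivAt
      · intro t htm
        exact hΦderiv t (hsub (by rwa [huicc] at htm))
      · exact (hΦ'cont.mono (by rw [huicc])).intervalIntegrable
    rw [← hint]
    apply intervalIntegral.integral_mono_on hεT
      ((hΦ'cont.mono (by rw [huicc])).intervalIntegrable)
      (((hqcont.mono hsub').mono (by rw [huicc])).intervalIntegrable)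
    intro t ht
    -- pointwise Φ' t ≤ q t
    have hs := hsin t (hsub ht)
    have hpyth := Real.sin_sq_add_cos_sq (lam * t)
    have hFsq : -(lam ^ 2) + lam ^ 2 / Real.sin (lam * t) ^ 2 = F t ^ 2 := by
      have hFt : F t ^ 2 = lam ^ 2 * (Real.cos (lam * t) ^ 2 / Real.sin (lam * t) ^ 2) := by
        simp only [hF]; ring
      have h2 : Real.cos (lam * t) ^ 2 = 1 - Real.sin (lam * t) ^ 2 := by
        linarith [hpyth]
      rw [hFt, h2]
      field_simp
      ring
    have hexp : (0:ℝ) ≤ ‖h' t - F t • h t‖ ^ 2 := sq_nonneg _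
    rw [norm_sub_sq_real] at hexp
    rw [norm_smul, Real.norm_eq_abs, mul_pow, sq_abs] at hexp
    rw [real_inner_smul_right] at hexp
    have hsym : ⟪h t, h' t⟫ = ⟪h' t, h t⟫ := real_inner_comm _ _
    have hself : ⟪h t, h t⟫ = ‖h t‖ ^ 2 := real_inner_self_eq_norm_sq _
    have hcoef : -(lam ^ 2) / Real.sin (lam * t) ^ 2 = -(F t ^ 2) - lam ^ 2 := by
      rw [neg_div]; linarith [hFsq]
    simp only [hΦ', hq, hself, hsym, hcoef]
    nlinarith [hexp]
  -- boundary bounds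
  have hedge : ∀ ε ∈ Set.Ioo (0:ℝ) (T / 2),
      -(2 * C ^ 2 * ε) ≤ ∫ t in ε..(T - ε), q t := by
    intro ε hε
    have hεpos := hε.1
    have hεT : ε < T := by linarith [hε.2]
    have hxπ : 0 < lam * ε := mul_pos hlam_pos hεpos
    have hxπ' : lam * ε < π := by
      have : lam * ε < lam * T := mul_lt_mul_of_pos_left hεT hlam_pos
      rwa [hlamT] at this
    have hcot : Real.cos (lam * ε) / Real.sin (lam * ε) ≤ 1 / (lam * ε) :=
      cot_le_inv' hxπ hxπ'
    have hFε : F ε ≤ 1 / ε := by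
      have h1 := mul_le_mul_of_nonneg_left hcot hlam_pos.le
      calc F ε ≤ lam * (1 / (lam * ε)) := h1
        _ = 1 / ε := by
            field_simp
    have hε_mem : ε ∈ Set.Icc (0:ℝ) T := ⟨hεpos.le, hεT.le⟩
    have hTε_mem : (T - ε) ∈ Set.Icc (0:ℝ) T := ⟨by linarith, by linarith⟩
    have hh1 : ‖h ε‖ ^ 2 ≤ C ^ 2 * ε ^ 2 := by
      have hb := (hhb ε hε_mem).1
      calc ‖h ε‖ ^ 2 ≤ (C * ε) ^ 2 := pow_le_pow_left₀ (norm_nonneg _) hb 2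
        _ = C ^ 2 * ε ^ 2 := by ring
    have hh2 : ‖h (T - ε)‖ ^ 2 ≤ C ^ 2 * ε ^ 2 := by
      have hb := (hhb (T - ε) hTε_mem).2
      have hb' : ‖h (T - ε)‖ ≤ C * ε := by
        simpa using hb
      calc ‖h (T - ε)‖ ^ 2 ≤ (C * ε) ^ 2 := pow_le_pow_left₀ (norm_nonneg _) hb' 2
        _ = C ^ 2 * ε ^ 2 := by ring
    have hΦε : Φ ε ≤ C ^ 2 * ε := by
      have hX : ⟪h ε, h ε⟫ = ‖h ε‖ ^ 2 := real_inner_self_eq_norm_sq _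
      have hXnn : (0:ℝ) ≤ ‖h ε‖ ^ 2 := sq_nonneg _
      calc Φ ε = F ε * ‖h ε‖ ^ 2 := by rw [hΦ]; simp only [hX]
        _ ≤ (1 / ε) * ‖h ε‖ ^ 2 := mul_le_mul_of_nonneg_right hFε hXnn
        _ ≤ (1 / ε) * (C ^ 2 * ε ^ 2) := by
            apply mul_le_mul_of_nonneg_left hh1
            positivity
        _ = C ^ 2 * ε := by
            field_simp
    have hΦTε : -(C ^ 2 * ε) ≤ Φ (T - ε) := by
      have harg : lam * (T - ε) = π - lam * ε := by rw [mul_sub, hlamT]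
      have hFTε : F (T - ε) = -F ε := by
        simp only [hF, harg, Real.cos_pi_sub, Real.sin_pi_sub]
        ring
      have hX : ⟪h (T - ε), h (T - ε)⟫ = ‖h (T - ε)‖ ^ 2 :=
        real_inner_self_eq_norm_sq _
      have hFlb : -(1 / ε) ≤ F (T - ε) := by rw [hFTε]; linarith [hFε]
      have hXnn : (0:ℝ) ≤ ‖h (T - ε)‖ ^ 2 := sq_nonneg _
      calc -(C ^ 2 * ε) = -(1 / ε) * (C ^ 2 * ε ^ 2) := by
            field_simp
        _ ≤ -(1 / ε) * ‖h (T - ε)‖ ^ 2 := by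
            apply mul_le_mul_of_nonpos_left hh2
            have : (0:ℝ) < 1 / ε := by positivity
            linarith
        _ ≤ F (T - ε) * ‖h (T - ε)‖ ^ 2 := mul_le_mul_of_nonneg_right hFlb hXnn
        _ = Φ (T - ε) := by rw [hΦ]; simp only [hX]
    have := hkey ε hε
    linarith
  -- global bound on q and splitting
  obtain ⟨M, hM⟩ := (isCompact_Icc (a := (0:ℝ)) (b := T)).exists_bound_of_continuousOn hqcont
  have hM0 : 0 ≤ M := le_trans (norm_nonneg _) (hM 0 ⟨le_rfl, hT.le⟩)
  have hqint : ∀ a b : ℝ, a ∈ Set.Icc (0:ℝ) T → b ∈ Set.Icc (0:ℝ) T →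
      IntervalIntegrable q volume a b := by
    intro a b ha hb
    apply (hqcont.mono _).intervalIntegrable
    rw [show Set.Icc (0:ℝ) T = Set.uIcc 0 T from (Set.uIcc_of_le hT.le).symm]
    exact Set.uIcc_subset_uIcc (by rwa [Set.uIcc_of_le hT.le]) (by rwa [Set.uIcc_of_le hT.le])
  have hmain : ∀ ε ∈ Set.Ioo (0:ℝ) (T / 2),
      -((2 * M + 2 * C ^ 2) * ε) ≤ ∫ t in (0:ℝ)..T, q t := by
    intro ε hε
    have hεpos := hε.1
    have hεT2 := hε.2
    have hε_mem : ε ∈ Set.Icc (0:ℝ) T := ⟨hεpos.le, by linarith⟩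
    have hTε_mem : (T - ε) ∈ Set.Icc (0:ℝ) T := ⟨by linarith, by linarith⟩
    have h0T : (0:ℝ) ∈ Set.Icc (0:ℝ) T := ⟨le_rfl, hT.le⟩
    have hTT : T ∈ Set.Icc (0:ℝ) T := ⟨hT.le, le_rfl⟩
    have hadd1 := intervalIntegral.integral_add_adjacent_intervals
      (hqint 0 ε h0T hε_mem) (hqint ε (T - ε) hε_mem hTε_mem)
    have hadd2 := intervalIntegral.integral_add_adjacent_intervals
      (hqint 0 (T - ε) h0T hTε_mem) (hqint (T - ε) T hTε_mem hTT)
    have hedge1 : ‖∫ t in (0:ℝ)..ε, q t‖ ≤ M * |ε - 0| := by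
      apply intervalIntegral.norm_integral_le_of_norm_le_const
      intro x hx
      rw [Set.uIoc_of_le hεpos.le] at hx
      exact hM x ⟨hx.1.le, le_trans hx.2 (by linarith)⟩
    have hedge2 : ‖∫ t in (T - ε)..T, q t‖ ≤ M * |T - (T - ε)| := by
      apply intervalIntegral.norm_integral_le_of_norm_le_const
      intro x hx
      rw [Set.uIoc_of_le (by linarith : T - ε ≤ T)] at hx
      exact hM x ⟨by linarith [hx.1], hx.2⟩
    rw [Real.norm_eq_abs] at hedge1 hedge2
    have he1 := abs_le.mp hedge1
    have he2 := abs_le.mp hedge2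
    have habs1 : |ε - (0:ℝ)| = ε := by rw [sub_zero, abs_of_nonneg hεpos.le]
    have habs2 : |T - (T - ε)| = ε := by
      rw [show T - (T - ε) = ε by ring, abs_of_nonneg hεpos.le]
    rw [habs1] at he1
    rw [habs2] at he2
    have hmid := hedge ε hε
    linarith [he1.1, he2.1]
  -- take ε → 0
  by_contra hneg
  push_neg at hneg
  set I : ℝ := ∫ t in (0:ℝ)..T, q t with hI
  set K : ℝ := 2 * M + 2 * C ^ 2 with hK
  have hK0 : 0 ≤ K := by positivity
  set ε : ℝ := min (T / 4) (-I / (K + 1)) with hεdef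
  have hIneg : I < 0 := hneg
  have hεpos : 0 < ε := lt_min (by linarith)
    (div_pos (by linarith) (by positivity))
  have hεlt : ε < T / 2 := lt_of_le_of_lt (min_le_left _ _) (by linarith)
  have hεle : ε ≤ -I / (K + 1) := min_le_right _ _
  have hmain' := hmain ε ⟨hεpos, hεlt⟩
  have hKε : K * ε ≤ K * (-I / (K + 1)) := mul_le_mul_of_nonneg_left hεle hK0
  have hlt1 : K / (K + 1) < 1 := by
    rw [div_lt_one (by positivity)]
    linarith
  have hfinal : K * (-I / (K + 1)) < -I :=
    calc K * (-I / (K + 1)) = (K / (K + 1)) * (-I) := by ring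
      _ < 1 * (-I) := mul_lt_mul_of_pos_right hlt1 (by linarith)
      _ = -I := one_mul _
  nlinarith [hmain', hKε, hfinal]
end poincare

/-- A Lagrangian path `g` solving Newton's equation `g̈ = -∇ₓ p(t, g)` for a
regular pressure (`∇ₓ² p ≤ R Id`, `R T² ≤ π²`) minimizes the action
`∫₀ᵀ (|ġ|²/2 - p(t, g(t))) dt` among `C¹` paths with the same endpoints. -/
theorem newton_path_minimizes_action
    (d : ℕ) (T R : ℝ) (hT : 0 < T) (hR : 0 < R) (hRT : R * T ^ 2 ≤ π ^ 2)
    (p : ℝ → EuclideanSpace ℝ (Fin d) → ℝ)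
    (hp_cont : Continuous fun q : ℝ × EuclideanSpace ℝ (Fin d) => p q.1 q.2)
    (hp_smooth : ∀ t ∈ Set.Icc (0 : ℝ) T, ContDiff ℝ 2 (p t))
    (hp_hess : ∀ t ∈ Set.Icc (0 : ℝ) T, ∀ x v : EuclideanSpace ℝ (Fin d),
      iteratedFDeriv ℝ 2 (p t) x ![v, v] ≤ R * ‖v‖ ^ 2)
    (g g' g'' : ℝ → EuclideanSpace ℝ (Fin d))
    (hg : ∀ t ∈ Set.Icc (0 : ℝ) T, HasDerivAt g (g' t) t)
    (hg' : ∀ t ∈ Set.Icc (0 : ℝ) T, HasDerivAt g' (g'' t) t)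
    (hg''cont : ContinuousOn g'' (Set.Icc (0 : ℝ) T))
    (hnewton : ∀ t ∈ Set.Icc (0 : ℝ) T, g'' t = -gradient (p t) (g t))
    (gs gs' : ℝ → EuclideanSpace ℝ (Fin d))
    (hgs : ∀ t ∈ Set.Icc (0 : ℝ) T, HasDerivAt gs (gs' t) t)
    (hgs' : ContinuousOn gs' (Set.Icc (0 : ℝ) T))
    (h0 : gs 0 = g 0) (hTend : gs T = g T) :
    (∫ t in (0:ℝ)..T, (1 / 2 * ‖g' t‖ ^ 2 - p t (g t)))
      ≤ ∫ t in (0:ℝ)..T, (1 / 2 * ‖gs' t‖ ^ 2 - p t (gs t)) := by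
  have hIcc : Set.uIcc (0:ℝ) T = Set.Icc 0 T := Set.uIcc_of_le hT.le
  set h : ℝ → EuclideanSpace ℝ (Fin d) := fun t => gs t - g t with hh_def
  set h' : ℝ → EuclideanSpace ℝ (Fin d) := fun t => gs' t - g' t with hh'_def
  have hh : ∀ t ∈ Set.Icc (0:ℝ) T, HasDerivAt h (h' t) t :=
    fun t ht => (hgs t ht).sub (hg t ht)
  have hzero0 : h 0 = 0 := by simp [hh_def, h0]
  have hzeroT : h T = 0 := by simp [hh_def, hTend]
  -- continuity facts
  have hcg : ContinuousOn g (Set.Icc (0:ℝ) T) :=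
    fun t ht => (hg t ht).continuousAt.continuousWithinAt
  have hcg' : ContinuousOn g' (Set.Icc (0:ℝ) T) :=
    fun t ht => (hg' t ht).continuousAt.continuousWithinAt
  have hcgs : ContinuousOn gs (Set.Icc (0:ℝ) T) :=
    fun t ht => (hgs t ht).continuousAt.continuousWithinAt
  have hch : ContinuousOn h (Set.Icc (0:ℝ) T) := hcgs.sub hcg
  have hch' : ContinuousOn h' (Set.Icc (0:ℝ) T) := hgs'.sub hcg'
  have hgradcont : ContinuousOn (fun t => gradient (p t) (g t)) (Set.Icc (0:ℝ) T) := by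
    apply ContinuousOn.congr hg''cont.neg
    intro t ht
    simp [hnewton t ht]
  have hcpg : ContinuousOn (fun t => p t (g t)) (Set.Icc (0:ℝ) T) :=
    (hp_cont.comp_continuousOn (continuousOn_id.prodMk hcg) :)
  have hcpgs : ContinuousOn (fun t => p t (gs t)) (Set.Icc (0:ℝ) T) :=
    (hp_cont.comp_continuousOn (continuousOn_id.prodMk hcgs) :)
  -- the auxiliary integrands
  set A : ℝ → ℝ := fun t => ⟪g' t, h' t⟫ - ⟪gradient (p t) (g t), h t⟫ with hA_def
  set B : ℝ → ℝ := fun t => 1 / 2 * ‖h' t‖ ^ 2 - R / 2 * ‖h t‖ ^ 2 with hB_def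
  have hcA : ContinuousOn A (Set.Icc (0:ℝ) T) :=
    (hcg'.inner hch').sub (hgradcont.inner hch)
  have hcB : ContinuousOn B (Set.Icc (0:ℝ) T) :=
    (continuousOn_const.mul ((hch'.norm).pow 2)).sub
      (continuousOn_const.mul ((hch.norm).pow 2))
  have hint : ∀ (f : ℝ → ℝ), ContinuousOn f (Set.Icc (0:ℝ) T) →
      IntervalIntegrable f volume 0 T := by
    intro f hf
    exact (hf.mono (by rw [hIcc])).intervalIntegrable
  -- Step 1: pointwise bound
  have hpt : ∀ t ∈ Set.Icc (0:ℝ) T,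
      A t + B t ≤ (1 / 2 * ‖gs' t‖ ^ 2 - p t (gs t)) - (1 / 2 * ‖g' t‖ ^ 2 - p t (g t)) := by
    intro t ht
    have htaylor := taylor_quadratic_upper (p t) (hp_smooth t ht) R
      (fun x v => hp_hess t ht x v) (g t) (h t)
    have hgt : g t + h t = gs t := by simp [hh_def]
    rw [hgt] at htaylor
    have hgrad : ⟪gradient (p t) (g t), h t⟫ = fderiv ℝ (p t) (g t) (h t) :=
      inner_gradient_eq_fderiv' _ _ _
    have hnorm : ‖gs' t‖ ^ 2 = ‖g' t‖ ^ 2 + 2 * ⟪g' t, h' t⟫ + ‖h' t‖ ^ 2 := by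
      have hgt' : gs' t = g' t + h' t := by simp [hh'_def]
      rw [hgt', norm_add_sq_real]
    simp only [hA_def, hB_def]
    rw [hnorm, hgrad]
    linarith [htaylor]
  -- Step 2a: ∫ A = 0 by integration by parts and Newton's equation
  have hAzero : (∫ t in (0:ℝ)..T, A t) = 0 := by
    have hφ : ∀ t ∈ Set.uIcc (0:ℝ) T,
        HasDerivAt (fun t => ⟪g' t, h t⟫) (⟪g' t, h' t⟫ + ⟪g'' t, h t⟫) t := by
      intro t ht
      rw [hIcc] at ht
      exact (hg' t ht).inner ℝ (hh t ht)
    have hφ'int : IntervalIntegrable (fun t => ⟪g' t, h' t⟫ + ⟪g'' t, h t⟫) volume 0 T :=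
      hint _ ((hcg'.inner hch').add (hg''cont.inner hch))
    have hftc := intervalIntegral.integral_eq_sub_of_hasDerivAt hφ hφ'int
    rw [hzeroT, hzero0, inner_zero_right, inner_zero_right, sub_self] at hftc
    have hcongr : (∫ t in (0:ℝ)..T, A t)
        = ∫ t in (0:ℝ)..T, (⟪g' t, h' t⟫ + ⟪g'' t, h t⟫) := by
      apply intervalIntegral.integral_congr
      intro t ht
      rw [hIcc] at ht
      simp only [hA_def]
      rw [hnewton t ht, inner_neg_left]
      ring
    rw [hcongr, hftc]
  -- Step 2b: ∫ B ≥ 0 by the Poincaré inequality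
  have hRle : R ≤ (π / T) ^ 2 := by
    rw [div_pow, le_div_iff₀ (by positivity : (0:ℝ) < T ^ 2)]
    exact hRT
  have hBnn : (0:ℝ) ≤ ∫ t in (0:ℝ)..T, B t := by
    have hpoin := poincare_dirichlet hT h h' hh hch' hzero0 hzeroT
    have hmono : (∫ t in (0:ℝ)..T, 1 / 2 * (‖h' t‖ ^ 2 - (π / T) ^ 2 * ‖h t‖ ^ 2))
        ≤ ∫ t in (0:ℝ)..T, B t := by
      apply intervalIntegral.integral_mono_on hT.le
      · exact hint _ (continuousOn_const.mul ((((hch'.norm).pow 2)).sub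
          (continuousOn_const.mul ((hch.norm).pow 2))))
      · exact hint _ hcB
      · intro t ht
        rw [hB_def]
        have hn : (0:ℝ) ≤ ‖h t‖ ^ 2 := sq_nonneg _
        nlinarith [mul_le_mul_of_nonneg_right hRle hn]
    have heq : (∫ t in (0:ℝ)..T, 1 / 2 * (‖h' t‖ ^ 2 - (π / T) ^ 2 * ‖h t‖ ^ 2))
        = 1 / 2 * ∫ t in (0:ℝ)..T, (‖h' t‖ ^ 2 - (π / T) ^ 2 * ‖h t‖ ^ 2) :=
      intervalIntegral.integral_const_mul _ _
    rw [heq] at hmono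
    nlinarith [hpoin, hmono]
  -- Step 3: conclude
  have hsub : (∫ t in (0:ℝ)..T, ((1 / 2 * ‖gs' t‖ ^ 2 - p t (gs t))
        - (1 / 2 * ‖g' t‖ ^ 2 - p t (g t))))
      = (∫ t in (0:ℝ)..T, (1 / 2 * ‖gs' t‖ ^ 2 - p t (gs t)))
        - ∫ t in (0:ℝ)..T, (1 / 2 * ‖g' t‖ ^ 2 - p t (g t)) := by
    apply intervalIntegral.integral_sub
    · exact hint _ ((continuousOn_const.mul ((hgs'.norm).pow 2)).sub hcpgs)
    · exact hint _ ((continuousOn_const.mul ((hcg'.norm).pow 2)).sub hcpg)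
  have hABint : (∫ t in (0:ℝ)..T, (A t + B t)) = (∫ t in (0:ℝ)..T, A t) + ∫ t in (0:ℝ)..T, B t :=
    intervalIntegral.integral_add (hint _ hcA) (hint _ hcB)
  have hfinal : (∫ t in (0:ℝ)..T, (A t + B t))
      ≤ ∫ t in (0:ℝ)..T, ((1 / 2 * ‖gs' t‖ ^ 2 - p t (gs t))
        - (1 / 2 * ‖g' t‖ ^ 2 - p t (g t))) := by
    apply intervalIntegral.integral_mono_on hT.le
    · exact hint _ (hcA.add hcB)
    · exact hint _ (((continuousOn_const.mul ((hgs'.norm).pow 2)).sub hcpgs).sub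
        ((continuousOn_const.mul ((hcg'.norm).pow 2)).sub hcpg))
    · exact hpt
  rw [hsub, hABint, hAzero, zero_add] at hfinal
  linarith [hBnn, hfinal]
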